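/- For every r ∈ ℝ, Û(r) = exp(rÂ) B, where Â is the matrix obtained from A by keeping exactly its first subdiagonal blocks in the adapted basis. -/

import Mathlib

open Matrix MeasureTheory

noncomputable section

/-- The span of the vectors `A^l B v` for `l < N`, `v ∈ ℝ^m`; for `N = k` this is `E_k`. -/
def kalmanSpan (d m : ℕ) (A : Matrix (Fin d) (Fin d) ℝ) (B : Matrix (Fin d) (Fin m) ℝ)
    (N : ℕ) : Submodule ℝ (Fin d → ℝ) :=
  Submodule.span ℝ {x | ∃ l, l < N ∧ ∃ v : Fin m → ℝ, x = (A ^ l * B).mulVec v}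

/-- `d_k = dim E_k` (with `d_0 = 0`). -/
def dk {d m : ℕ} (A : Matrix (Fin d) (Fin d) ℝ) (B : Matrix (Fin d) (Fin m) ℝ) (k : ℕ) : ℕ :=
  Module.finrank ℝ (kalmanSpan d m A B k)

/-- The level of an index `j` (zero-based): the unique `k ≥ 1` with `d_{k−1} ≤ j < d_k`
(zero-based), i.e. `d_{k−1} < j+1 ≤ d_k` in one-based labelling. -/
def lvl {d m : ℕ} (A : Matrix (Fin d) (Fin d) ℝ) (B : Matrix (Fin d) (Fin m) ℝ)
    (j : Fin d) : ℕ :=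
  sInf {k : ℕ | (j : ℕ) < dk A B k}

/-- The entries of the matrices `u_k`, arranged as a `d × m` array:
for `d_{k−1} < j ≤ d_k` (one-based) the `j`-th row of `u_k` is
`(⟨e_j, A^{k−1} B e_i⟩ / (k−1)!)_i`. -/
def uEnt {d m : ℕ} (A : Matrix (Fin d) (Fin d) ℝ) (B : Matrix (Fin d) (Fin m) ℝ)
    (e : Fin d → Fin d → ℝ) (j : Fin d) (i : Fin m) : ℝ :=
  (e j ⬝ᵥ fun a => (A ^ (lvl A B j - 1) * B) a i) / Nat.factorial (lvl A B j - 1)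

/-- `Û(r)`: the `d × m` matrix whose `j`-th row, for `d_{k−1} < j ≤ d_k`, is `r^{k−1}`
times the corresponding row of `u_k`. -/
def Uhat {d m : ℕ} (A : Matrix (Fin d) (Fin d) ℝ) (B : Matrix (Fin d) (Fin m) ℝ)
    (e : Fin d → Fin d → ℝ) (r : ℝ) : Matrix (Fin d) (Fin m) ℝ :=
  Matrix.of fun j i => r ^ (lvl A B j - 1) * uEnt A B e j i

/-- `J_t`: the diagonal matrix whose `j`-th diagonal entry, for `d_{k−1} < j ≤ d_k`,
is `t^{k−1/2}` (real power). -/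
def Jmat {d m : ℕ} (A : Matrix (Fin d) (Fin d) ℝ) (B : Matrix (Fin d) (Fin m) ℝ)
    (t : ℝ) : Matrix (Fin d) (Fin d) ℝ :=
  Matrix.diagonal fun j => t ^ ((lvl A B j : ℝ) - 1 / 2)

/-- `D_ε`: the diagonal matrix whose `j`-th diagonal entry, for `d_{k−1} < j ≤ d_k`,
is `ε^{k−1}`. -/
def Dmat {d m : ℕ} (A : Matrix (Fin d) (Fin d) ℝ) (B : Matrix (Fin d) (Fin m) ℝ)
    (ε : ℝ) : Matrix (Fin d) (Fin d) ℝ :=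
  Matrix.diagonal fun j => ε ^ (lvl A B j - 1)

/-- `V`: the `n × n` block matrix with `(k,l)`-block
`V_{kl} = (−1)^{l+1} u_k u_l* (k−1)!(l−1)!/(k+l−1)!`, written entrywise. -/
def Vmat {d m : ℕ} (A : Matrix (Fin d) (Fin d) ℝ) (B : Matrix (Fin d) (Fin m) ℝ)
    (e : Fin d → Fin d → ℝ) : Matrix (Fin d) (Fin d) ℝ :=
  Matrix.of fun a b =>
    (-1 : ℝ) ^ (lvl A B b + 1) *
      ((Nat.factorial (lvl A B a - 1) * Nat.factorial (lvl A B b - 1) : ℝ) /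
        Nat.factorial (lvl A B a + lvl A B b - 1)) *
      ∑ i : Fin m, uEnt A B e a i * uEnt A B e b i

open Classical in
/-- `Â`: the matrix characterised in the orthonormal basis `e` by
`⟨e_i, Â e_j⟩ = ⟨e_i, A e_j⟩` whenever there is `k ∈ {1,…,n−1}` with
`d_{k−1} < j ≤ d_k` and `d_k < i ≤ d_{k+1}` (one-based indices), and
`⟨e_i, Â e_j⟩ = 0` otherwise. -/
def Ahat {d m : ℕ} (A : Matrix (Fin d) (Fin d) ℝ) (B : Matrix (Fin d) (Fin m) ℝ)
    (e : Fin d → Fin d → ℝ) (n : ℕ) : Matrix (Fin d) (Fin d) ℝ :=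
  Matrix.of fun a b =>
    ∑ i : Fin d, ∑ j : Fin d,
      (if ∃ k, 1 ≤ k ∧ k ≤ n - 1 ∧
            (dk A B (k - 1) < (j : ℕ) + 1 ∧ (j : ℕ) + 1 ≤ dk A B k) ∧
            (dk A B k < (i : ℕ) + 1 ∧ (i : ℕ) + 1 ≤ dk A B (k + 1))
        then e i ⬝ᵥ A.mulVec (e j) else 0) * e i a * e j b

/-!
Write `E` for the orthogonal matrix whose rows are the `e j`, and index rows by the shifted
level `lvl j - 1 ∈ {0, …, n - 1}`. Because `A E_k ⊆ E_{k+1}` and the columns of `B` lie in `E_1`,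
the matrix `E A Eᵀ` vanishes below its first block subdiagonal and `E B` is concentrated in
block `0`. The first block subdiagonal `Â'` of `E A Eᵀ` raises the level by exactly one, so
`Â'^p (E B)` lives in block `p`, where it agrees with `(E A Eᵀ)^p (E B) = E A^p B`. Hence `Â'` is
nilpotent, `exp (r Â')` is a finite sum, and block `k` of `exp (r Â') (E B)` is
`r^k / k! · (E A^k B)_k`, which is `Û(r)`. Finally `Â = Eᵀ Â' E`, and conjugation commutes
with `exp`.
-/

lemma NormedSpace.exp_eq_sum_range_of_pow_eq_zero (𝕂 : Type*) {𝔸 : Type*} [Field 𝕂]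
    [CharZero 𝕂] [Ring 𝔸] [Algebra 𝕂 𝔸] [TopologicalSpace 𝔸] [IsTopologicalRing 𝔸] {x : 𝔸}
    {n : ℕ} (h : x ^ n = 0) :
    NormedSpace.exp x = ∑ p ∈ Finset.range n, (p.factorial⁻¹ : 𝕂) • x ^ p := by
  rw [NormedSpace.exp_eq_tsum 𝕂]
  exact tsum_eq_sum fun p hp => by
    rw [pow_eq_zero_of_le (by simpa using hp) h, smul_zero]

namespace Matrix

variable {ι κ R : Type*}

section Orthogonal

variable [Fintype ι]

lemma of_mul_mul_transpose_apply [CommSemiring R] (e : ι → ι → R) (M : Matrix ι ι R)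
    (i j : ι) : (of e * M * (of e)ᵀ) i j = e i ⬝ᵥ M *ᵥ e j := by
  simp only [mul_apply, of_apply, transpose_apply, dotProduct, mulVec, Finset.sum_mul,
    Finset.mul_sum, mul_assoc]
  exact Finset.sum_comm

variable [DecidableEq ι]

lemma of_mul_transpose_eq_one [Semiring R] {e : ι → ι → R}
    (he : ∀ i j, e i ⬝ᵥ e j = if i = j then 1 else 0) : of e * (of e)ᵀ = 1 :=
  ext fun i j => by simpa [mul_apply, one_apply, dotProduct] using he i j

lemma mul_mul_transpose_pow_mul [CommRing R] {E : Matrix ι ι R} (hE : E * Eᵀ = 1)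
    (M : Matrix ι ι R) (C : Matrix ι κ R) (p : ℕ) :
    (E * M * Eᵀ) ^ p * (E * C) = E * (M ^ p * C) := by
  let U : (Matrix ι ι R)ˣ := ⟨E, Eᵀ, hE, mul_eq_one_comm.mp hE⟩
  rw [show (E * M * Eᵀ) ^ p = E * M ^ p * Eᵀ from Units.conj_pow U M p, Matrix.mul_assoc,
    ← Matrix.mul_assoc Eᵀ, mul_eq_one_comm.mp hE, Matrix.one_mul, Matrix.mul_assoc]

lemma mul_exp_transpose_mul_mul {𝔸 : Type*} [NormedCommRing 𝔸] [NormedAlgebra ℚ 𝔸]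
    [CompleteSpace 𝔸] {E : Matrix ι ι 𝔸} (hE : E * Eᵀ = 1) (X : Matrix ι ι 𝔸) :
    E * NormedSpace.exp (Eᵀ * X * E) = NormedSpace.exp X * E := by
  let U : (Matrix ι ι 𝔸)ˣ := ⟨E, Eᵀ, hE, mul_eq_one_comm.mp hE⟩
  have hconj : NormedSpace.exp (Eᵀ * X * E) = Eᵀ * NormedSpace.exp X * E :=
    exp_units_conj' U X
  rw [hconj, ← Matrix.mul_assoc, ← Matrix.mul_assoc, hE, Matrix.one_mul]

end Orthogonal

def blockSubdiagonal [Zero R] (lv : ι → ℕ) (M : Matrix ι ι R) : Matrix ι ι R :=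
  of fun i j => if lv i = lv j + 1 then M i j else 0

@[simp]
lemma blockSubdiagonal_apply [Zero R] (lv : ι → ℕ) (M : Matrix ι ι R) (i j : ι) :
    blockSubdiagonal lv M i j = if lv i = lv j + 1 then M i j else 0 :=
  rfl

variable [Fintype ι] [DecidableEq ι] {lv : ι → ℕ}

section Semiring

variable [Semiring R] {M : Matrix ι ι R} {C : Matrix ι κ R}

lemma pow_mul_apply_eq_zero_of_lt (hM : ∀ i j, lv j + 1 < lv i → M i j = 0)
    (hC : ∀ i k, 0 < lv i → C i k = 0) {p : ℕ} {i : ι} (hp : p < lv i) (k : κ) :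
    (M ^ p * C) i k = 0 := by
  induction p generalizing i with
  | zero => simpa using hC i k hp
  | succ p ih =>
    rw [pow_succ', Matrix.mul_assoc, mul_apply]
    refine Finset.sum_eq_zero fun j _ => ?_
    rcases lt_or_ge p (lv j) with hj | hj
    · rw [ih hj, mul_zero]
    · rw [hM i j (by omega), zero_mul]

lemma blockSubdiagonal_pow_apply_eq_zero_of_lt {p : ℕ} {i : ι} (hp : lv i < p) (j : ι) :
    (blockSubdiagonal lv M ^ p) i j = 0 := by
  induction p generalizing i with
  | zero => omega
  | succ p ih =>
    rw [pow_succ', mul_apply]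
    refine Finset.sum_eq_zero fun a _ => ?_
    by_cases ha : lv i = lv a + 1
    · rw [ih (by omega), mul_zero]
    · rw [blockSubdiagonal_apply, if_neg ha, zero_mul]

lemma blockSubdiagonal_pow_eq_zero {p : ℕ} (hp : ∀ i, lv i < p) :
    blockSubdiagonal lv M ^ p = 0 :=
  ext fun i j => blockSubdiagonal_pow_apply_eq_zero_of_lt (hp i) j

lemma blockSubdiagonal_pow_mul_apply (hM : ∀ i j, lv j + 1 < lv i → M i j = 0)
    (hC : ∀ i k, 0 < lv i → C i k = 0) (p : ℕ) (i : ι) (k : κ) :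
    (blockSubdiagonal lv M ^ p * C) i k = if lv i = p then (M ^ p * C) i k else 0 := by
  induction p generalizing i with
  | zero =>
    rw [pow_zero, pow_zero, Matrix.one_mul]
    split_ifs with hi
    · rfl
    · exact hC i k (by omega)
  | succ p ih =>
    rw [pow_succ', pow_succ', Matrix.mul_assoc, Matrix.mul_assoc, mul_apply, mul_apply]
    simp_rw [ih, blockSubdiagonal_apply, ite_mul, zero_mul, mul_ite, mul_zero]
    split_ifs with hi
    · refine Finset.sum_congr rfl fun j _ => ?_
      by_cases hj : lv j = p
      · simp [hj, hi]
      · rcases lt_or_gt_of_ne hj with hlt | hgt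
        · simp [hM i j (by omega), hj]
        · simp [pow_mul_apply_eq_zero_of_lt hM hC hgt, hj]
    · refine Finset.sum_eq_zero fun j _ => ?_
      split_ifs <;> first | rfl | omega

end Semiring

lemma exp_smul_blockSubdiagonal_mul_apply {𝕂 : Type*} [Field 𝕂] [CharZero 𝕂]
    [TopologicalSpace 𝕂] [IsTopologicalRing 𝕂] {M : Matrix ι ι 𝕂} {C : Matrix ι κ 𝕂}
    (hM : ∀ i j, lv j + 1 < lv i → M i j = 0) (hC : ∀ i k, 0 < lv i → C i k = 0) {n : ℕ}
    (hn : ∀ i, lv i < n) (r : 𝕂) (i : ι) (k : κ) :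
    (NormedSpace.exp (r • blockSubdiagonal lv M) * C) i k =
      r ^ lv i / (lv i).factorial * (M ^ lv i * C) i k := by
  have hnil : (r • blockSubdiagonal lv M) ^ n = 0 := by
    rw [smul_pow, blockSubdiagonal_pow_eq_zero hn, smul_zero]
  rw [NormedSpace.exp_eq_sum_range_of_pow_eq_zero 𝕂 hnil, Matrix.sum_mul, sum_apply,
    Finset.sum_eq_single_of_mem (lv i) (Finset.mem_range.mpr (hn i))]
  · rw [smul_pow, smul_mul, smul_mul, smul_apply, smul_apply, blockSubdiagonal_pow_mul_apply hM hC,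
      if_pos rfl, smul_eq_mul, smul_eq_mul, div_eq_inv_mul, mul_assoc]
  · intro p _ hp
    rw [smul_pow, smul_mul, smul_mul, smul_apply, smul_apply, blockSubdiagonal_pow_mul_apply hM hC,
      if_neg (Ne.symm hp), smul_zero, smul_zero]

end Matrix
section KalmanFlag

variable {d m n : ℕ} {A : Matrix (Fin d) (Fin d) ℝ} {B : Matrix (Fin d) (Fin m) ℝ}

lemma kalmanSpan_mono : Monotone (kalmanSpan d m A B) :=
  fun _ _ hNN' => Submodule.span_mono fun _ ⟨l, hl, v, hv⟩ => ⟨l, hl.trans_le hNN', v, hv⟩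

lemma dk_mono : Monotone (dk A B) :=
  fun _ _ h => Submodule.finrank_mono (kalmanSpan_mono h)

lemma dk_zero : dk A B 0 = 0 := by
  rw [dk, kalmanSpan, Submodule.finrank_eq_zero, Submodule.span_eq_bot]
  rintro _ ⟨l, hl, -⟩
  omega

lemma dk_eq_of_kalmanSpan_eq_top (hK : kalmanSpan d m A B n = ⊤) : dk A B n = d := by
  rw [dk, hK, finrank_top, Module.finrank_fin_fun]

lemma lt_dk_lvl (hK : kalmanSpan d m A B n = ⊤) (j : Fin d) : (j : ℕ) < dk A B (lvl A B j) :=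
  Nat.sInf_mem (s := {k | (j : ℕ) < dk A B k}) ⟨n, by simp [dk_eq_of_kalmanSpan_eq_top hK]⟩

lemma lvl_le (hK : kalmanSpan d m A B n = ⊤) (j : Fin d) : lvl A B j ≤ n :=
  Nat.sInf_le (by simp [dk_eq_of_kalmanSpan_eq_top hK])

lemma one_le_lvl (hK : kalmanSpan d m A B n = ⊤) (j : Fin d) : 1 ≤ lvl A B j := by
  by_contra h
  have := lt_dk_lvl hK j
  rw [show lvl A B j = 0 by omega, dk_zero] at this
  omega

lemma dk_le_of_lt_lvl {j : Fin d} {k : ℕ} (hk : k < lvl A B j) : dk A B k ≤ (j : ℕ) :=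
  not_lt.mp fun h => hk.not_ge (Nat.sInf_le (show k ∈ {k | (j : ℕ) < dk A B k} from h))

lemma lvl_eq_of_dk_le_of_lt (hK : kalmanSpan d m A B n = ⊤) {j : Fin d} {k : ℕ} (hk : 1 ≤ k)
    (hlo : dk A B (k - 1) ≤ (j : ℕ)) (hhi : (j : ℕ) < dk A B k) : lvl A B j = k := by
  refine le_antisymm (Nat.sInf_le hhi) (not_lt.mp fun hlt => ?_)
  have := dk_mono (A := A) (B := B) (show lvl A B j ≤ k - 1 by omega)
  have := lt_dk_lvl hK j
  omega

lemma Ahat_condition_iff (hK : kalmanSpan d m A B n = ⊤) (i j : Fin d) :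
    (∃ k, 1 ≤ k ∧ k ≤ n - 1 ∧
        (dk A B (k - 1) < (j : ℕ) + 1 ∧ (j : ℕ) + 1 ≤ dk A B k) ∧
        (dk A B k < (i : ℕ) + 1 ∧ (i : ℕ) + 1 ≤ dk A B (k + 1))) ↔
      lvl A B i = lvl A B j + 1 := by
  constructor
  · rintro ⟨k, hk, -, ⟨hj₁, hj₂⟩, hi₁, hi₂⟩
    rw [lvl_eq_of_dk_le_of_lt (j := j) hK hk (by omega) (by omega),
      lvl_eq_of_dk_le_of_lt (j := i) (k := k + 1) hK (by omega)
        (by rw [Nat.add_sub_cancel]; omega) (by omega)]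
  · intro h
    have hj := dk_le_of_lt_lvl (show lvl A B j - 1 < lvl A B j by have := one_le_lvl hK j; omega)
    have hi := dk_le_of_lt_lvl (show lvl A B j < lvl A B i by omega)
    have := lt_dk_lvl hK j
    have := lt_dk_lvl hK i
    have := lvl_le hK i
    refine ⟨lvl A B j, one_le_lvl hK j, by omega, ⟨by omega, by omega⟩, by omega, ?_⟩
    rw [← h]; omega

lemma col_mem_kalmanSpan_one (i : Fin m) : (fun a => B a i) ∈ kalmanSpan d m A B 1 :=
  Submodule.subset_span ⟨0, zero_lt_one, Pi.single i 1, by ext; simp [mulVec_single]⟩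

lemma mulVec_mem_kalmanSpan_succ {k : ℕ} {x : Fin d → ℝ} (hx : x ∈ kalmanSpan d m A B k) :
    A *ᵥ x ∈ kalmanSpan d m A B (k + 1) := by
  refine Submodule.span_le (p := (kalmanSpan d m A B (k + 1)).comap A.mulVecLin) |>.mpr ?_ hx
  rintro _ ⟨l, hl, v, rfl⟩
  rw [SetLike.mem_coe, Submodule.mem_comap, mulVecLin_apply, mulVec_mulVec, ← Matrix.mul_assoc,
    ← pow_succ']
  exact Submodule.subset_span ⟨l + 1, by omega, v, rfl⟩

end KalmanFlag

def IsAdaptedToKalmanFlag {d m : ℕ} (A : Matrix (Fin d) (Fin d) ℝ)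
    (B : Matrix (Fin d) (Fin m) ℝ) (n : ℕ) (e : Fin d → Fin d → ℝ) : Prop :=
  ∀ k : ℕ, 1 ≤ k → k ≤ n →
    kalmanSpan d m A B k = Submodule.span ℝ {x | ∃ j : Fin d, (j : ℕ) < dk A B k ∧ x = e j}

section AdaptedBasis

variable {d m n : ℕ} {A : Matrix (Fin d) (Fin d) ℝ} {B : Matrix (Fin d) (Fin m) ℝ}
  {e : Fin d → Fin d → ℝ}

lemma mem_kalmanSpan_lvl (hK : kalmanSpan d m A B n = ⊤) (he : IsAdaptedToKalmanFlag A B n e)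
    (a : Fin d) :
    e a ∈ kalmanSpan d m A B (lvl A B a) := by
  rw [he _ (one_le_lvl hK a) (lvl_le hK a)]
  exact Submodule.subset_span ⟨a, lt_dk_lvl hK a, rfl⟩

lemma dotProduct_eq_zero_of_mem_kalmanSpan
    (h_on : ∀ i j : Fin d, e i ⬝ᵥ e j = if i = j then 1 else 0)
    (he : IsAdaptedToKalmanFlag A B n e)
    {k : ℕ} (hk : 1 ≤ k) (hkn : k ≤ n) {x : Fin d → ℝ} (hx : x ∈ kalmanSpan d m A B k)
    {j : Fin d} (hj : k < lvl A B j) : e j ⬝ᵥ x = 0 := by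
  rw [he k hk hkn] at hx
  induction hx using Submodule.span_induction with
  | mem x hx =>
    obtain ⟨a, ha, rfl⟩ := hx
    have : j ≠ a := fun hja => by have := dk_le_of_lt_lvl hj; omega
    simp [h_on, this]
  | zero => exact dotProduct_zero _
  | add x y _ _ hx hy => rw [dotProduct_add, hx, hy, add_zero]
  | smul c x _ hx => rw [dotProduct_smul, hx, smul_zero]

lemma of_mul_mul_transpose_apply_eq_zero_of_lvl_lt (hK : kalmanSpan d m A B n = ⊤)
    (h_on : ∀ i j : Fin d, e i ⬝ᵥ e j = if i = j then 1 else 0)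
    (he : IsAdaptedToKalmanFlag A B n e)
    {i j : Fin d} (h : lvl A B j + 1 < lvl A B i) : (of e * A * (of e)ᵀ) i j = 0 := by
  rw [of_mul_mul_transpose_apply]
  have := lvl_le hK i
  exact dotProduct_eq_zero_of_mem_kalmanSpan h_on he (by omega) (by omega)
    (mulVec_mem_kalmanSpan_succ (mem_kalmanSpan_lvl hK he j)) h

lemma of_mul_apply_eq_zero_of_one_lt_lvl (hK : kalmanSpan d m A B n = ⊤)
    (h_on : ∀ i j : Fin d, e i ⬝ᵥ e j = if i = j then 1 else 0)
    (he : IsAdaptedToKalmanFlag A B n e)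
    {i : Fin d} (h : 1 < lvl A B i) (k : Fin m) : (of e * B) i k = 0 := by
  have := lvl_le hK i
  exact dotProduct_eq_zero_of_mem_kalmanSpan h_on he le_rfl (by omega)
    (col_mem_kalmanSpan_one k) h

lemma Ahat_eq_transpose_mul_blockSubdiagonal_mul (hK : kalmanSpan d m A B n = ⊤) :
    Ahat A B e n =
      (of e)ᵀ * blockSubdiagonal (fun j => lvl A B j - 1) (of e * A * (of e)ᵀ) * of e := by
  have hA (i j : Fin d) : e i ⬝ᵥ A *ᵥ e j = (of e * A * (of e)ᵀ) i j :=
    (of_mul_mul_transpose_apply e A i j).symm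
  have hlvl (i j : Fin d) : lvl A B i = lvl A B j + 1 ↔ lvl A B i - 1 = lvl A B j - 1 + 1 := by
    have := one_le_lvl hK i
    have := one_le_lvl hK j
    omega
  simp only [Ahat, Ahat_condition_iff hK, hlvl, hA]
  generalize of e * A * (of e)ᵀ = M
  ext a b
  simp only [of_apply, mul_apply, transpose_apply, blockSubdiagonal_apply, Finset.sum_mul]
  rw [Finset.sum_comm]
  exact Finset.sum_congr rfl fun i _ => Finset.sum_congr rfl fun j _ => by ring

end AdaptedBasis

theorem Uhat_eq_exp_Ahat_general
    (d m : ℕ)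
    (A : Matrix (Fin d) (Fin d) ℝ) (B : Matrix (Fin d) (Fin m) ℝ)
    (n : ℕ) (hK : kalmanSpan d m A B n = ⊤)
    (e : Fin d → Fin d → ℝ)
    (h_on : ∀ i j : Fin d, e i ⬝ᵥ e j = if i = j then (1:ℝ) else 0)
    (h_adapt : ∀ k : ℕ, 1 ≤ k → k ≤ n →
      kalmanSpan d m A B k =
        Submodule.span ℝ {x | ∃ j : Fin d, (j : ℕ) < dk A B k ∧ x = e j}) :
    ∀ r : ℝ, ∀ j : Fin d, ∀ i : Fin m,
      Uhat A B e r j i =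
        e j ⬝ᵥ fun a => (NormedSpace.exp (r • Ahat A B e n) * B) a i := by
  intro r j i
  have hE : of e * (of e)ᵀ = 1 := of_mul_transpose_eq_one h_on
  set Â' := blockSubdiagonal (fun j => lvl A B j - 1) (of e * A * (of e)ᵀ)
  calc Uhat A B e r j i
      = r ^ (lvl A B j - 1) / (lvl A B j - 1).factorial *
          ((of e * A * (of e)ᵀ) ^ (lvl A B j - 1) * (of e * B)) j i := by
        rw [mul_mul_transpose_pow_mul hE, Uhat, of_apply, uEnt, mul_div_assoc',
          div_mul_eq_mul_div]
        rfl
    _ = (NormedSpace.exp (r • Â') * (of e * B)) j i :=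
        (exp_smul_blockSubdiagonal_mul_apply (n := n)
          (fun i j (h : lvl A B j - 1 + 1 < lvl A B i - 1) =>
            of_mul_mul_transpose_apply_eq_zero_of_lvl_lt hK h_on h_adapt (by omega))
          (fun i k (h : 0 < lvl A B i - 1) =>
            of_mul_apply_eq_zero_of_one_lt_lvl hK h_on h_adapt (by omega) k)
          (fun a => by have := one_le_lvl hK a; have := lvl_le hK a; omega) r j i).symm
    _ = (of e * NormedSpace.exp (r • Ahat A B e n) * B) j i := by
        rw [Ahat_eq_transpose_mul_blockSubdiagonal_mul hK, ← Matrix.smul_mul, ← Matrix.mul_smul,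
          mul_exp_transpose_mul_mul hE, Matrix.mul_assoc]
    _ = _ := by rw [Matrix.mul_assoc]; rfl

/-- For every `r ∈ ℝ`, `Û(r) = exp(rÂ) B`, as matrices expressed in the adapted
orthonormal basis `e` (rows) and the standard basis of `ℝ^m` (columns). -/
theorem Uhat_eq_exp_Ahat
    (d m : ℕ) (hd : 0 < d) (hm : 0 < m)
    (A : Matrix (Fin d) (Fin d) ℝ) (B : Matrix (Fin d) (Fin m) ℝ)
    (n : ℕ) (hK : kalmanSpan d m A B n = ⊤)
    (hmin : ∀ N : ℕ, kalmanSpan d m A B N = ⊤ → n ≤ N)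
    (e : Fin d → Fin d → ℝ)
    (h_on : ∀ i j : Fin d, e i ⬝ᵥ e j = if i = j then (1:ℝ) else 0)
    (h_adapt : ∀ k : ℕ, 1 ≤ k → k ≤ n →
      kalmanSpan d m A B k =
        Submodule.span ℝ {x | ∃ j : Fin d, (j : ℕ) < dk A B k ∧ x = e j}) :
    ∀ r : ℝ, ∀ j : Fin d, ∀ i : Fin m,
      Uhat A B e r j i =
        e j ⬝ᵥ fun a => (NormedSpace.exp (r • Ahat A B e n) * B) a i :=
  Uhat_eq_exp_Ahat_general d m A B n hK e h_on h_adapt
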